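/- Suppose K and N are self-adjoint and positive definite, i.e., there exist c₁, c₂ > 0 with ⟨Kw, w⟩ ≥ c₁‖w‖² and ⟨Nw, w⟩ ≥ c₂‖w‖² for all w ∈ W, and suppose w* = (u₀*, p*) ∈ W is a saddle point. Let sequences (w^k)_{k≥0} and (w̃^k)_{k≥0} in W satisfy, for every k, the prediction variational inequality φ(u₀) − φ(ũ₀^k) + ⟨w − w̃^k, F(w̃^k) + G(w̃^k − w^k)⟩ ≥ 0 for all w = (u₀, p) ∈ W, and the correction step w^{k+1} = w^k − D(w^k − w̃^k). Then u₀^k → u₀* strongly in H and p^k → p* strongly in H. -/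

import Mathlib

open scoped InnerProductSpace RealInnerProductSpace

noncomputable section

/-- The product space `W = H × H` equipped with the Hilbert space structure
`⟨(u,p),(u',p')⟩ = ⟨u,u'⟩ + ⟨p,p'⟩`. -/
abbrev W (H : Type*) [NormedAddCommGroup H] [InnerProductSpace ℝ H] := WithLp 2 (H × H)

/-- The canonical (linear homeomorphism) identification of `W` with the plain product. -/
def eW (H : Type*) [NormedAddCommGroup H] [InnerProductSpace ℝ H] :
    W H ≃L[ℝ] H × H := WithLp.prodContinuousLinearEquiv 2 ℝ H H

variable {H : Type*} [NormedAddCommGroup H] [InnerProductSpace ℝ H] [CompleteSpace H]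

/-- The block diagonal operator `D(u,p) = (ρu, σp)` on `W`. -/
def opD (H : Type*) [NormedAddCommGroup H] [InnerProductSpace ℝ H] (ρ σ : ℝ) :
    W H →L[ℝ] W H :=
  ((eW H).symm.toContinuousLinearMap.comp
    ((ρ • ContinuousLinearMap.fst ℝ H H).prod (σ • ContinuousLinearMap.snd ℝ H H))).comp
    (eW H).toContinuousLinearMap

/-- The block operator `G(u,p) = ((1/r)u − ℒ*p, −θℒu + (1/s)p)` on `W`. -/
def opG (L : H →L[ℝ] H) (r s θ : ℝ) : W H →L[ℝ] W H :=
  ((eW H).symm.toContinuousLinearMap.comp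
    (((1 / r) • ContinuousLinearMap.fst ℝ H H
        - (ContinuousLinearMap.adjoint L).comp (ContinuousLinearMap.snd ℝ H H)).prod
      ((-θ) • (L.comp (ContinuousLinearMap.fst ℝ H H))
        + (1 / s) • ContinuousLinearMap.snd ℝ H H))).comp
    (eW H).toContinuousLinearMap

/-- The operator `K = G ∘ D⁻¹`. -/
def opK (L : H →L[ℝ] H) (r s θ ρ σ : ℝ) : W H →L[ℝ] W H :=
  (opG L r s θ).comp (opD H ρ⁻¹ σ⁻¹)

/-- The operator `N = G + G* − D* ∘ K ∘ D`. -/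
def opN (L : H →L[ℝ] H) (r s θ ρ σ : ℝ) : W H →L[ℝ] W H :=
  opG L r s θ + ContinuousLinearMap.adjoint (opG L r s θ)
    - ((ContinuousLinearMap.adjoint (opD H ρ σ)).comp
        ((opK L r s θ ρ σ).comp (opD H ρ σ)))

/-- The map `F(u₀, p) = (τu₀ + ℒ*p, p − ℒu₀ + u_T)` on `W`. -/
def Fmap (L : H →L[ℝ] H) (uT : H) (τ : ℝ) : W H → W H := fun w =>
  (eW H).symm (τ • ((eW H) w).1 + ContinuousLinearMap.adjoint L ((eW H) w).2,
               ((eW H) w).2 - L ((eW H) w).1 + uT)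

/-- `‖w‖²_A = ⟨Aw, w⟩` for an operator `A` on `W`. -/
def normSq (A : W H →L[ℝ] W H) (w : W H) : ℝ := ⟪A w, w⟫_ℝ

/-- A saddle point `w* = (u₀*, p*)`: `φ(u₀) − φ(u₀*) + ⟨w − w*, F(w*)⟩ ≥ 0` for all `w`. -/
def IsSaddle (L : H →L[ℝ] H) (uT : H) (τ : ℝ) (φ : H → ℝ) (wstar : W H) : Prop :=
  ∀ w : W H, φ ((eW H w).1) - φ ((eW H wstar).1)
      + ⟪w - wstar, Fmap L uT τ wstar⟫_ℝ ≥ 0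

/-- The prediction variational inequality satisfied by `w̃` given `wᵏ`:
`φ(u₀) − φ(ũ₀) + ⟨w − w̃, F(w̃) + G(w̃ − wᵏ)⟩ ≥ 0` for all `w`. -/
def PredVI (L : H →L[ℝ] H) (uT : H) (τ : ℝ) (φ : H → ℝ) (r s θ : ℝ)
    (wk wt : W H) : Prop :=
  ∀ w : W H, φ ((eW H w).1) - φ ((eW H wt).1)
      + ⟪w - wt, Fmap L uT τ wt + opG L r s θ (wt - wk)⟫_ℝ ≥ 0

end

section AuxLemmas
open ContinuousLinearMap
variable {H : Type*} [NormedAddCommGroup H] [InnerProductSpace ℝ H] [CompleteSpace H]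

lemma inner_eW (a b : W H) :
    ⟪a, b⟫_ℝ = ⟪(eW H a).1, (eW H b).1⟫_ℝ + ⟪(eW H a).2, (eW H b).2⟫_ℝ := rfl

lemma normW_sq (v : W H) : ‖v‖ ^ 2 = ‖(eW H v).1‖ ^ 2 + ‖(eW H v).2‖ ^ 2 := by
  rw [← real_inner_self_eq_norm_sq, inner_eW, real_inner_self_eq_norm_sq,
    real_inner_self_eq_norm_sq]

lemma opD_fst (ρ σ : ℝ) (v : W H) : (eW H (opD H ρ σ v)).1 = ρ • (eW H v).1 := rfl
lemma opD_snd (ρ σ : ℝ) (v : W H) : (eW H (opD H ρ σ v)).2 = σ • (eW H v).2 := rfl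

lemma opG_fst (L : H →L[ℝ] H) (r s θ : ℝ) (v : W H) :
    (eW H (opG L r s θ v)).1 = (1 / r) • (eW H v).1 - adjoint L ((eW H v).2) := rfl
lemma opG_snd (L : H →L[ℝ] H) (r s θ : ℝ) (v : W H) :
    (eW H (opG L r s θ v)).2 = (-θ) • L ((eW H v).1) + (1 / s) • (eW H v).2 := rfl

lemma Fmap_fst (L : H →L[ℝ] H) (uT : H) (τ : ℝ) (v : W H) :
    (eW H (Fmap L uT τ v)).1 = τ • (eW H v).1 + adjoint L ((eW H v).2) := rfl
lemma Fmap_snd (L : H →L[ℝ] H) (uT : H) (τ : ℝ) (v : W H) :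
    (eW H (Fmap L uT τ v)).2 = (eW H v).2 - L ((eW H v).1) + uT := rfl

lemma eW_ext {a b : W H} (h1 : (eW H a).1 = (eW H b).1) (h2 : (eW H a).2 = (eW H b).2) :
    a = b := by
  apply (eW H).injective; exact Prod.ext h1 h2

lemma opK_opD (L : H →L[ℝ] H) (r s θ ρ σ : ℝ) (hρ : ρ ≠ 0) (hσ : σ ≠ 0) (v : W H) :
    opK L r s θ ρ σ (opD H ρ σ v) = opG L r s θ v := by
  show opG L r s θ (opD H ρ⁻¹ σ⁻¹ (opD H ρ σ v)) = opG L r s θ v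
  congr 1
  apply eW_ext <;>
    simp [opD_fst, opD_snd, smul_smul, inv_mul_cancel₀ hρ, inv_mul_cancel₀ hσ]

/-- Strong monotonicity of `F`. -/
lemma Fmono (L : H →L[ℝ] H) (uT : H) (τ : ℝ) (a b : W H) :
    ⟪a - b, Fmap L uT τ a - Fmap L uT τ b⟫_ℝ
      = τ * ‖(eW H a).1 - (eW H b).1‖ ^ 2 + ‖(eW H a).2 - (eW H b).2‖ ^ 2 := by
  rw [inner_eW]
  simp only [map_sub, Prod.fst_sub, Prod.snd_sub, Fmap_fst, Fmap_snd]
  set Δu := (eW H a).1 - (eW H b).1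
  set Δp := (eW H a).2 - (eW H b).2
  have h1 : τ • (eW H a).1 + adjoint L ((eW H a).2)
      - (τ • (eW H b).1 + adjoint L ((eW H b).2)) = τ • Δu + adjoint L Δp := by
    simp [Δu, Δp, smul_sub, map_sub]; abel
  have h2 : (eW H a).2 - L ((eW H a).1) + uT - ((eW H b).2 - L ((eW H b).1) + uT)
      = Δp - L Δu := by
    simp [Δu, Δp, map_sub]; abel
  rw [h1, h2, inner_add_right, inner_sub_right, real_inner_smul_right,
    ContinuousLinearMap.adjoint_inner_right, real_inner_self_eq_norm_sq,
    real_inner_self_eq_norm_sq, real_inner_comm Δp (L Δu)]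
  ring

end AuxLemmas

set_option maxHeartbeats 1000000 in
/-- Global strong convergence: if `K` and `N` are self-adjoint and positive definite and the
sequences satisfy the prediction VI and the correction step, then `u₀ᵏ → u₀*` and `pᵏ → p*`
strongly in `H`. -/
theorem strong_convergence
    {H : Type*} [NormedAddCommGroup H] [InnerProductSpace ℝ H] [CompleteSpace H]
    (L : H →L[ℝ] H) (uT : H) (τ β : ℝ) (hτ : 0 < τ) (hβ : 0 ≤ β)
    (φ : H → ℝ) (hφ : ConvexOn ℝ Set.univ φ)
    (r s θ ρ σ : ℝ) (hr : 0 < r) (hs : 0 < s) (hθ : θ ∈ Set.Ioc (0 : ℝ) 1)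
    (hρ : 0 < ρ) (hσ : 0 < σ)
    (hKsa : IsSelfAdjoint (opK L r s θ ρ σ))
    (hNsa : IsSelfAdjoint (opN L r s θ ρ σ))
    (c₁ : ℝ) (hc₁ : 0 < c₁)
    (hKpd : ∀ w : W H, ⟪opK L r s θ ρ σ w, w⟫_ℝ ≥ c₁ * ‖w‖ ^ 2)
    (c₂ : ℝ) (hc₂ : 0 < c₂)
    (hNpd : ∀ w : W H, ⟪opN L r s θ ρ σ w, w⟫_ℝ ≥ c₂ * ‖w‖ ^ 2)
    (wstar : W H) (hstar : IsSaddle L uT τ φ wstar)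
    (w wt : ℕ → W H)
    (hVI : ∀ k : ℕ, PredVI L uT τ φ r s θ (w k) (wt k))
    (hcorr : ∀ k : ℕ, w (k + 1) = w k - opD H ρ σ (w k - wt k)) :
    Filter.Tendsto (fun k => (eW H (w k)).1) Filter.atTop (nhds ((eW H wstar).1)) ∧
    Filter.Tendsto (fun k => (eW H (w k)).2) Filter.atTop (nhds ((eW H wstar).2)) := by
  classical
  obtain ⟨K, hKeq⟩ : ∃ K' : W H →L[ℝ] W H, K' = opK L r s θ ρ σ := ⟨_, rfl⟩
  obtain ⟨G, hGeq⟩ : ∃ G' : W H →L[ℝ] W H, G' = opG L r s θ := ⟨_, rfl⟩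
  obtain ⟨N, hNeq⟩ : ∃ N' : W H →L[ℝ] W H, N' = opN L r s θ ρ σ := ⟨_, rfl⟩
  obtain ⟨D, hDeq⟩ : ∃ D' : W H →L[ℝ] W H, D' = opD H ρ σ := ⟨_, rfl⟩
  rw [← hKeq] at hKsa hKpd
  rw [← hNeq] at hNpd
  obtain ⟨e, hee⟩ : ∃ e : ℕ → W H, ∀ k, e k = w k - wstar := ⟨_, fun _ => rfl⟩
  obtain ⟨d, hde⟩ : ∃ d : ℕ → W H, ∀ k, d k = w k - wt k := ⟨_, fun _ => rfl⟩
  obtain ⟨x, hxe⟩ : ∃ x : ℕ → W H, ∀ k, x k = wt k - wstar := ⟨_, fun _ => rfl⟩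
  obtain ⟨a, hae⟩ : ∃ a : ℕ → ℝ, ∀ k, a k = ⟪K (e k), e k⟫_ℝ := ⟨_, fun _ => rfl⟩
  set m : ℝ := min τ 1 with hm
  have hm0 : 0 < m := lt_min hτ one_pos
  have hKswap : ∀ u v : W H, ⟪K u, v⟫_ℝ = ⟪u, K v⟫_ℝ := by
    intro u v
    rw [← hKsa.adjoint_eq, ContinuousLinearMap.adjoint_inner_left, hKsa.adjoint_eq]
  have hKD : ∀ v : W H, K (D v) = G v := by
    intro v; rw [hKeq, hDeq, hGeq]; exact opK_opD L r s θ ρ σ hρ.ne' hσ.ne' v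
  have hexd : ∀ k, e k = x k + d k := by
    intro k; simp only [hee, hxe, hde]; abel
  -- Step A
  have stepA : ∀ k, ⟪G (d k), x k⟫_ℝ ≥ m * ‖x k‖ ^ 2 := by
    intro k
    have h1 := hVI k wstar
    have h2 := hstar (wt k)
    have key : ⟪wstar - wt k, Fmap L uT τ (wt k) + opG L r s θ (wt k - w k)⟫_ℝ
        = -⟪x k, Fmap L uT τ (wt k)⟫_ℝ + ⟪G (d k), x k⟫_ℝ := by
      have e1 : wstar - wt k = -(x k) := by rw [hxe]; abel
      have e2 : wt k - w k = -(d k) := by rw [hde]; abel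
      rw [e1, e2, map_neg, inner_neg_left, inner_add_right, inner_neg_right, hGeq,
        real_inner_comm (x k) (opG L r s θ (d k))]
      ring
    rw [key] at h1
    rw [← hxe k] at h2
    have h4 := Fmono L uT τ (wt k) wstar
    rw [← hxe k, inner_sub_right] at h4
    have h6 : ‖x k‖ ^ 2 = ‖(eW H (wt k)).1 - (eW H wstar).1‖ ^ 2
        + ‖(eW H (wt k)).2 - (eW H wstar).2‖ ^ 2 := by
      rw [hxe k, normW_sq]; simp
    have hmτ : m ≤ τ := min_le_left _ _
    have hm1 : m ≤ 1 := min_le_right _ _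
    have hsq1 : (0:ℝ) ≤ ‖(eW H (wt k)).1 - (eW H wstar).1‖ ^ 2 := sq_nonneg _
    have hsq2 : (0:ℝ) ≤ ‖(eW H (wt k)).2 - (eW H wstar).2‖ ^ 2 := sq_nonneg _
    nlinarith [h1, h2, h4]
  -- Step B
  have stepB : ∀ k, a k - a (k + 1) = 2 * ⟪G (d k), x k⟫_ℝ + ⟪N (d k), d k⟫_ℝ := by
    intro k
    have hek : e (k + 1) = e k - D (d k) := by
      simp only [hee, hde, hDeq, hcorr]; abel
    have hNd : ⟪N (d k), d k⟫_ℝ = 2 * ⟪G (d k), d k⟫_ℝ - ⟪G (d k), D (d k)⟫_ℝ := by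
      have h9 : N (d k) = G (d k) + ContinuousLinearMap.adjoint G (d k)
          - ContinuousLinearMap.adjoint D (K (D (d k))) := by
        rw [hNeq, hGeq, hDeq, hKeq]; rfl
      rw [h9, inner_sub_left, inner_add_left, ContinuousLinearMap.adjoint_inner_left,
        ContinuousLinearMap.adjoint_inner_left, hKD,
        real_inner_comm (d k) (G (d k))]
      ring
    have c1 : a (k + 1) = ⟪K (e k), e k⟫_ℝ - ⟪G (d k), e k⟫_ℝ - ⟪G (d k), e k⟫_ℝ
        + ⟪G (d k), D (d k)⟫_ℝ := by
      rw [hae, hek, map_sub, inner_sub_left, inner_sub_right, inner_sub_right, hKD,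
        hKswap (e k) (D (d k)), hKD, real_inner_comm (e k) (G (d k))]
      ring
    have c5 : ⟪G (d k), e k⟫_ℝ = ⟪G (d k), x k⟫_ℝ + ⟪G (d k), d k⟫_ℝ := by
      rw [hexd, inner_add_right]
    rw [hae k, c1, hNd, c5]
    ring
  -- a nonnegative, antitone
  have haNN : ∀ k, 0 ≤ a k := by
    intro k
    have h := hKpd (e k)
    have h0 : (0:ℝ) ≤ c₁ * ‖e k‖ ^ 2 := by positivity
    rw [hae]
    linarith
  have hbNN : ∀ k, 0 ≤ 2 * m * ‖x k‖ ^ 2 + c₂ * ‖d k‖ ^ 2 := by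
    intro k; positivity
  have hstep : ∀ k, 2 * m * ‖x k‖ ^ 2 + c₂ * ‖d k‖ ^ 2 ≤ a k - a (k + 1) := by
    intro k
    rw [stepB k]
    have hA := stepA k
    have hB := hNpd (d k)
    linarith
  have hanti : Antitone a := by
    apply antitone_nat_of_succ_le
    intro k
    have h1 := hstep k
    have h2 := hbNN k
    linarith
  have hbdd : BddBelow (Set.range a) := ⟨0, by rintro _ ⟨k, rfl⟩; exact haNN k⟩
  have halim : Filter.Tendsto a Filter.atTop (nhds (⨅ k, a k)) :=
    tendsto_atTop_ciInf hanti hbdd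
  have halim' : Filter.Tendsto (fun k => a (k + 1)) Filter.atTop (nhds (⨅ k, a k)) :=
    halim.comp (Filter.tendsto_add_atTop_nat 1)
  have hdiff : Filter.Tendsto (fun k => a k - a (k + 1)) Filter.atTop (nhds 0) := by
    have := halim.sub halim'
    simpa using this
  have hb0 : Filter.Tendsto (fun k => 2 * m * ‖x k‖ ^ 2 + c₂ * ‖d k‖ ^ 2)
      Filter.atTop (nhds 0) :=
    squeeze_zero hbNN hstep hdiff
  have hx2 : Filter.Tendsto (fun k => ‖x k‖ ^ 2) Filter.atTop (nhds 0) := by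
    apply squeeze_zero (fun k => sq_nonneg _)
      (g := fun k => (1 / (2 * m)) * (2 * m * ‖x k‖ ^ 2 + c₂ * ‖d k‖ ^ 2))
    · intro k
      rw [← sub_nonneg]
      have : (1 / (2 * m)) * (2 * m * ‖x k‖ ^ 2 + c₂ * ‖d k‖ ^ 2) - ‖x k‖ ^ 2
          = (1 / (2 * m)) * (c₂ * ‖d k‖ ^ 2) := by
        field_simp
        ring
      rw [this]
      positivity
    · have := hb0.const_mul (1 / (2 * m))
      simpa using this
  have hd2 : Filter.Tendsto (fun k => ‖d k‖ ^ 2) Filter.atTop (nhds 0) := by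
    apply squeeze_zero (fun k => sq_nonneg _)
      (g := fun k => (1 / c₂) * (2 * m * ‖x k‖ ^ 2 + c₂ * ‖d k‖ ^ 2))
    · intro k
      rw [← sub_nonneg]
      have : (1 / c₂) * (2 * m * ‖x k‖ ^ 2 + c₂ * ‖d k‖ ^ 2) - ‖d k‖ ^ 2
          = (1 / c₂) * (2 * m * ‖x k‖ ^ 2) := by
        field_simp
        ring
      rw [this]
      positivity
    · have := hb0.const_mul (1 / c₂)
      simpa using this
  have sqrt_trick : ∀ (f : ℕ → W H),
      Filter.Tendsto (fun k => ‖f k‖ ^ 2) Filter.atTop (nhds 0) →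
      Filter.Tendsto f Filter.atTop (nhds 0) := by
    intro f hf
    rw [tendsto_zero_iff_norm_tendsto_zero]
    have := (Real.continuous_sqrt.tendsto 0).comp hf
    simp only [Function.comp_def, Real.sqrt_zero] at this
    convert this using 2 with k
    rw [Real.sqrt_sq (norm_nonneg _)]
  have hxlim : Filter.Tendsto x Filter.atTop (nhds 0) := sqrt_trick x hx2
  have hdlim : Filter.Tendsto d Filter.atTop (nhds 0) := sqrt_trick d hd2
  have hwlim : Filter.Tendsto w Filter.atTop (nhds wstar) := by
    have helim : Filter.Tendsto e Filter.atTop (nhds 0) := by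
      have hfe : e = fun k => x k + d k := funext hexd
      rw [hfe]
      have h0 := hxlim.add hdlim
      rw [add_zero] at h0
      exact h0
    have hwe : w = fun k => e k + wstar := by
      funext k; rw [hee]; abel
    rw [hwe]
    have h0 := helim.add (tendsto_const_nhds : Filter.Tendsto _ Filter.atTop (nhds wstar))
    rw [zero_add] at h0
    exact h0
  have heWlim : Filter.Tendsto (fun k => eW H (w k)) Filter.atTop (nhds (eW H wstar)) :=
    ((eW H).continuous.tendsto wstar).comp hwlim
  exact ⟨(continuous_fst.tendsto _).comp heWlim, (continuous_snd.tendsto _).comp heWlim⟩
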